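/- Pipeline form of Ψ: for every simple path p : Quiver.Path u v, the stateful list map Ψ p equals the elementwise stateful map of Φ p, i.e., Ψ p = stmap (Φ p) as functions List (obj u) × S → List (obj v) × S. (This equality expresses that the stagewise evaluation of Ψ along the path can be replaced by a per-element pipeline of Φ p, exhibiting the pipeline parallelism of smap.) -/

import Mathlib

noncomputable section

/-- The type of all arrows of a quiver. -/
abbrev QArr (V : Type) [Quiver.{0} V] : Type := Σ x : V, Σ y : V, x ⟶ y

section STC

variable {V : Type} [Quiver.{0} V] (obj : V → Type) (st : QArr V → Type)

/-- The global state: one state component per arrow. -/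
abbrev GState : Type := ∀ e : QArr V, st e

open Classical in
/-- Update the `e`-component of the global state, leaving the others unchanged. -/
def updState (σ : GState st) (e : QArr V) (x : st e) : GState st :=
  fun e' => if h : e' = e then cast (congrArg st h).symm x else σ e'

variable (φ : ∀ e : QArr V, obj e.1 × st e → obj e.2.1 × st e)

/-- The extension `φ* e` of the fundamental state thread `φ e` to the global state. -/
def phiExt (e : QArr V) : obj e.1 × GState st → obj e.2.1 × GState st :=
  fun z =>
    let r := φ e (z.1, z.2 e)
    (r.1, updState st z.2 e r.2)

/-- `Φ p` : composite of the extensions `φ*` along the arrows of the path `p`. -/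
def Phi {u : V} : ∀ {v : V}, Quiver.Path u v → (obj u × GState st → obj v × GState st)
  | _, .nil => id
  | _, .cons p e => fun z => phiExt obj st φ ⟨_, _, e⟩ (Phi p z)

/-- `ψ e` (curried auxiliary version): the stateful list map of `φ e`. -/
def psiAux (e : QArr V) : List (obj e.1) → st e → List (obj e.2.1) × st e
  | [], σ => ([], σ)
  | x :: xs, σ =>
    let r := φ e (x, σ)
    let r' := psiAux e xs r.2
    (r.1 :: r'.1, r'.2)

/-- `ψ e` : the stateful list map of the fundamental state thread `φ e`. -/
def psi (e : QArr V) : List (obj e.1) × st e → List (obj e.2.1) × st e :=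
  fun z => psiAux obj st φ e z.1 z.2

/-- The extension `ψ* e` of `ψ e` to the global state. -/
def psiExt (e : QArr V) : List (obj e.1) × GState st → List (obj e.2.1) × GState st :=
  fun z =>
    let r := psi obj st φ e (z.1, z.2 e)
    (r.1, updState st z.2 e r.2)

/-- `Ψ p` : composite of the extensions `ψ*` along the arrows of the path `p`. -/
def Psi {u : V} : ∀ {v : V}, Quiver.Path u v → (List (obj u) × GState st → List (obj v) × GState st)
  | _, .nil => id
  | _, .cons p e => fun z => psiExt obj st φ ⟨_, _, e⟩ (Psi p z)

/-- The list of arrows (as elements of `QArr V`) occurring in a path. -/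
def pathArrows {u : V} : ∀ {v : V}, Quiver.Path u v → List (QArr V)
  | _, .nil => []
  | _, .cons p e => ⟨_, _, e⟩ :: pathArrows p

/-- A path is simple if its arrows are pairwise distinct as elements of `QArr V`. -/
def SimplePath {u v : V} (p : Quiver.Path u v) : Prop := (pathArrows p).Nodup

/-- The stateful list map of a function `F : α × S → β × S` (auxiliary curried form). -/
def stmapAux {α β S : Type} (F : α × S → β × S) : List α → S → List β × S
  | [], σ => ([], σ)
  | x :: xs, σ =>
    let r := F (x, σ)
    let r' := stmapAux F xs r.2
    (r.1 :: r'.1, r'.2)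

/-- The stateful list map of a function `F : α × S → β × S`. -/
def stmap {α β S : Type} (F : α × S → β × S) : List α × S → List β × S :=
  fun z => stmapAux F z.1 z.2

end STC

/-! By induction along the path. The stage `ψ* e` is itself the stateful list map of `φ* e`.
On a simple path the new arrow `e` does not occur in the path `p` before it, so `Φ p` neither
reads nor writes the `e`-component of the state, while `φ* e` touches only that component.
Hence running `Φ p` over the whole list and then `φ* e` over its outputs is the same as pushing
each element through `Φ p` and then `φ* e` in turn. -/

open Function

section Pipeline

variable {V : Type} [Quiver.{0} V] {obj : V → Type} {st : QArr V → Type}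

open Classical in
theorem updState_eq_update (σ : GState st) (e : QArr V) (x : st e) :
    updState st σ e x = update σ e x := by
  funext e'
  by_cases h : e' = e
  · subst h; simp [updState]
  · simp [updState, h]

@[simp]
theorem stmap_nil {α β S : Type} (F : α × S → β × S) (σ : S) : stmap F ([], σ) = ([], σ) := rfl

@[simp]
theorem stmap_cons {α β S : Type} (F : α × S → β × S) (x : α) (xs : List α) (σ : S) :
    stmap F (x :: xs, σ) =
      ((F (x, σ)).1 :: (stmap F (xs, (F (x, σ)).2)).1, (stmap F (xs, (F (x, σ)).2)).2) := rfl

theorem stmap_id {α S : Type} : stmap (id : α × S → α × S) = id := by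
  funext ⟨xs, σ⟩
  induction xs with
  | nil => rfl
  | cons x xs ih => simp [ih]

variable (φ : ∀ e : QArr V, obj e.1 × st e → obj e.2.1 × st e)

open Classical in
theorem phiExt_apply (e : QArr V) (z : obj e.1 × GState st) :
    phiExt obj st φ e z = ((φ e (z.1, z.2 e)).1, update z.2 e (φ e (z.1, z.2 e)).2) := by
  simp [phiExt, updState_eq_update]

theorem psiExt_eq_stmap_phiExt (e : QArr V) : psiExt obj st φ e = stmap (phiExt obj st φ e) := by
  classical
  funext ⟨xs, σ⟩
  induction xs generalizing σ with
  | nil => simp [psiExt, psi, psiAux, updState_eq_update]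
  | cons x xs ih =>
    rw [stmap_cons, phiExt_apply, ← ih]
    simp [psiExt, psi, psiAux, updState_eq_update]

open Classical in
/-- `F` neither reads nor writes the `e`-component of the global state. -/
def IgnoresComponent (e : QArr V) {α β : Type} (F : α × GState st → β × GState st) : Prop :=
  ∀ x σ s, F (x, update σ e s) = ((F (x, σ)).1, update (F (x, σ)).2 e s)

namespace IgnoresComponent

variable {e : QArr V} {α β : Type} {F : α × GState st → β × GState st}

theorem snd_apply (hF : IgnoresComponent e F) (x : α) (σ : GState st) :
    (F (x, σ)).2 e = σ e := by
  classical
  have h := hF x σ (σ e)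
  rw [update_eq_self] at h
  rw [h]
  exact update_self _ _ _

theorem stmap (hF : IgnoresComponent e F) : IgnoresComponent e (stmap F) := by
  intro xs σ s
  induction xs generalizing σ with
  | nil => rfl
  | cons x xs ih => simp [hF x σ s, ih]

end IgnoresComponent

theorem ignoresComponent_Phi {u v : V} (p : Quiver.Path u v) {e : QArr V}
    (he : e ∉ pathArrows p) : IgnoresComponent e (Phi obj st φ p) := by
  classical
  induction p with
  | nil => intro x σ s; rfl
  | cons p a ih =>
    simp only [pathArrows, List.mem_cons, not_or] at he
    intro x σ s
    simp only [Phi, ih he.2 x σ s, phiExt_apply, update_of_ne (Ne.symm he.1), update_comm he.1]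

/-- The two stages act on disjoint parts of the state, so their steps can be interleaved. -/
theorem stmap_phiExt_stmap {e : QArr V} {α : Type} {F : α × GState st → obj e.1 × GState st}
    (hF : IgnoresComponent e F) (z : List α × GState st) :
    stmap (phiExt obj st φ e) (stmap F z) = stmap (fun w => phiExt obj st φ e (F w)) z := by
  classical
  obtain ⟨xs, σ⟩ := z
  induction xs generalizing σ with
  | nil => rfl
  | cons x xs ih =>
    have hτ : (stmap F (xs, (F (x, σ)).2)).2 e = (F (x, σ)).2 e := hF.stmap.snd_apply xs _
    simp only [stmap_cons, ← ih]
    rw [phiExt_apply φ e (F (x, σ)), phiExt_apply, hτ, hF.stmap xs]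

end Pipeline

/-- pipeline form of `Ψ`: on a simple path `p`, the stagewise stateful
list map `Ψ p` coincides with the per-element pipeline `stmap (Φ p)`. -/
theorem Psi_eq_stmap_Phi {V : Type} [Quiver.{0} V] (obj : V → Type) (st : QArr V → Type)
    (φ : ∀ e : QArr V, obj e.1 × st e → obj e.2.1 × st e)
    (u v : V) (p : Quiver.Path u v) (hp : SimplePath p) :
    Psi obj st φ p = stmap (Phi obj st φ p) := by
  induction p with
  | nil => exact stmap_id.symm
  | cons p a ih =>
    obtain ⟨ha, hp⟩ := List.nodup_cons.mp hp
    funext z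
    calc Psi obj st φ (p.cons a) z
        = stmap (phiExt obj st φ ⟨_, _, a⟩) (stmap (Phi obj st φ p) z) := by
          rw [Psi, ih hp, psiExt_eq_stmap_phiExt]
      _ = stmap (Phi obj st φ (p.cons a)) z :=
          stmap_phiExt_stmap φ (ignoresComponent_Phi φ p ha) z
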